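/- Let Γ be a hyperbolic group and H < Γ a quasiconvex subgroup. Suppose a sequence (γ_n) in Γ diverges away from H, i.e., d_Γ(H, γ_n) → ∞. Setting γ̂_n := pr_H(γ_n)⁻¹ γ_n, the sequences (γ_n⁻¹) and (γ̂_n⁻¹) fellow travel (their Gromov products (γ_n⁻¹, γ̂_n⁻¹)_{1_Γ} tend to infinity), and hence have the same accumulation sets in ∂_∞Γ. -/
import Mathlib


open Filter

/-- The Gromov product `(x,y)_w`. -/
noncomputable def gromovProd {Γ : Type*} [MetricSpace Γ] (x y w : Γ) : ℝ :=
  (dist x w + dist y w - dist x y) / 2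

/-- The metric is invariant under left multiplication. -/
def LeftInvariantMetric (Γ : Type*) [Group Γ] [MetricSpace Γ] : Prop :=
  ∀ g x y : Γ, dist (g * x) (g * y) = dist x y

/-- `δ`-hyperbolicity via the Gromov product inequality. -/
def IsDeltaHyperbolic (Γ : Type*) [MetricSpace Γ] (δ : ℝ) : Prop :=
  ∀ x y z w : Γ, min (gromovProd x z w) (gromovProd y z w) - δ ≤ gromovProd x y w

/-- A discrete geodesic segment `c : {0,…,n} → Γ`. -/
def IsGeodesicSeg {Γ : Type*} [MetricSpace Γ] (c : ℕ → Γ) (n : ℕ) : Prop :=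
  ∀ i j : ℕ, i ≤ n → j ≤ n → dist (c i) (c j) = |(i : ℝ) - (j : ℝ)|

/-- Every pair of points is joined by a discrete geodesic (as in a word metric). -/
def GeodesicMetric (Γ : Type*) [MetricSpace Γ] : Prop :=
  ∀ x y : Γ, ∃ (c : ℕ → Γ) (n : ℕ), IsGeodesicSeg c n ∧ c 0 = x ∧ c n = y

/-- `Y` is quasiconvex with constant `K`. -/
def QuasiconvexSubset {Γ : Type*} [MetricSpace Γ] (Y : Set Γ) (K : ℝ) : Prop :=
  ∀ y₁ ∈ Y, ∀ y₂ ∈ Y, ∀ (c : ℕ → Γ) (n : ℕ),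
    IsGeodesicSeg c n → c 0 = y₁ → c n = y₂ → ∀ i ≤ n, ∃ y ∈ Y, dist (c i) y ≤ K

/-- `p` is a nearest point projection onto `Y`. -/
def IsNearestPointProj {Γ : Type*} [MetricSpace Γ] (Y : Set Γ) (p : Γ → Γ) : Prop :=
  ∀ γ : Γ, p γ ∈ Y ∧ ∀ y ∈ Y, dist (p γ) γ ≤ dist y γ

/-- A sequence diverges to infinity in the Gromov sense (its Gromov products with
itself, based at `1`, tend to infinity). -/
def DivergesToInf {Γ : Type*} [Group Γ] [MetricSpace Γ] (s : ℕ → Γ) : Prop :=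
  Tendsto (fun q : ℕ × ℕ => gromovProd (s q.1) (s q.2) (1 : Γ)) atTop atTop

/-- Two sequences fellow travel: their Gromov products based at `1` tend to infinity. -/
def FellowTravel {Γ : Type*} [Group Γ] [MetricSpace Γ] (s t : ℕ → Γ) : Prop :=
  Tendsto (fun n => gromovProd (s n) (t n) (1 : Γ)) atTop atTop

/-- The Gromov boundary: divergent sequences modulo fellow-traveling. -/
def GromovBoundary (Γ : Type*) [Group Γ] [MetricSpace Γ] : Type _ :=
  Quot (fun s t : {s : ℕ → Γ // DivergesToInf s} => FellowTravel s.1 t.1)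

/-- A sequence converges to the boundary point `ε`. -/
def ConvToBdry {Γ : Type*} [Group Γ] [MetricSpace Γ] (s : ℕ → Γ) (ε : GromovBoundary Γ) :
    Prop :=
  ∃ h : DivergesToInf s, Quot.mk _ (⟨s, h⟩ : {s : ℕ → Γ // DivergesToInf s}) = ε

/-- `ε` is an accumulation point of the sequence `s` in the Gromov boundary. -/
def BdryAccPt {Γ : Type*} [Group Γ] [MetricSpace Γ] (s : ℕ → Γ) (ε : GromovBoundary Γ) :
    Prop :=
  ∃ φ : ℕ → ℕ, StrictMono φ ∧ ConvToBdry (s ∘ φ) ε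

/-- The accumulation set `∂_∞ Y` of a subset `Y ⊆ Γ` in the Gromov boundary. -/
def bdrySet {Γ : Type*} [Group Γ] [MetricSpace Γ] (Y : Set Γ) : Set (GromovBoundary Γ) :=
  {ε | ∃ s : ℕ → Γ, (∀ n, s n ∈ Y) ∧ ConvToBdry s ε}

lemma gromovProd_comm {Γ : Type*} [MetricSpace Γ] (x y w : Γ) :
    gromovProd x y w = gromovProd y x w := by
  unfold gromovProd; rw [dist_comm x y]; ring

lemma gromovProd_le_dist_left {Γ : Type*} [MetricSpace Γ] (x y w : Γ) :
    gromovProd x y w ≤ dist x w := by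
  have := dist_triangle y x w
  have h2 := dist_comm y x
  unfold gromovProd; linarith

lemma delta_nonneg {Γ : Type*} [MetricSpace Γ] [Inhabited Γ] {δ : ℝ}
    (hδ : IsDeltaHyperbolic Γ δ) : 0 ≤ δ := by
  have h := hδ default default default default
  simp [gromovProd] at h
  linarith

/-- Key bound: the Gromov product of `1` and `g` based at the projection `p g`
is uniformly bounded. -/
lemma proj_gromov_bound {Γ : Type*} [Group Γ] [MetricSpace Γ] (δ K : ℝ)
    (hgeo : GeodesicMetric Γ) (hδ : IsDeltaHyperbolic Γ δ)
    (H : Subgroup Γ) (p : Γ → Γ) (hH : QuasiconvexSubset (H : Set Γ) K)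
    (hp : IsNearestPointProj (H : Set Γ) p) :
    ∃ C : ℝ, ∀ g : Γ, gromovProd 1 g (p g) ≤ C := by
  set N : ℕ := ⌈K + 2 * δ⌉₊ + 1 with hNdef
  have hNgt : K + 2 * δ < (N : ℝ) := by
    calc K + 2 * δ ≤ (⌈K + 2 * δ⌉₊ : ℝ) := Nat.le_ceil _
    _ < (N : ℝ) := by exact_mod_cast Nat.lt_succ_self _
  refine ⟨max (N : ℝ) (((N : ℝ) + K) / 2 + δ), fun g => ?_⟩
  obtain ⟨c, n, hc, hc0, hcn⟩ := hgeo 1 (p g)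
  have hd1h : dist (1 : Γ) (p g) = (n : ℝ) := by
    have := hc 0 n (Nat.zero_le n) le_rfl
    rw [hc0, hcn] at this
    simpa using this
  by_cases hn : n < N
  · -- short case: the product is at most `dist 1 (p g) = n ≤ N`
    have h1 := gromovProd_le_dist_left 1 g (p g)
    have : (n : ℝ) ≤ (N : ℝ) := by exact_mod_cast hn.le
    calc gromovProd 1 g (p g) ≤ dist (1 : Γ) (p g) := h1
    _ = (n : ℝ) := hd1h
    _ ≤ (N : ℝ) := this
    _ ≤ _ := le_max_left _ _
  · push_neg at hn
    set i : ℕ := n - N with hidef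
    have hi : i ≤ n := Nat.sub_le _ _
    have hicast : ((i : ℕ) : ℝ) = (n : ℝ) - (N : ℝ) := by
      show ((n - N : ℕ) : ℝ) = (n : ℝ) - (N : ℝ)
      exact Nat.cast_sub hn
    have hmh : dist (c i) (p g) = (N : ℝ) := by
      have := hc i n hi le_rfl
      rw [hcn, hicast] at this
      rw [this, show ((n : ℝ) - N) - n = -(N : ℝ) by ring, abs_neg, abs_of_nonneg]
      positivity
    have h1m : dist (1 : Γ) (c i) = (n : ℝ) - (N : ℝ) := by
      have := hc 0 i (Nat.zero_le n) hi
      rw [hc0, hicast] at this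
      rw [Nat.cast_zero] at this
      rw [this, show (0 : ℝ) - ((n : ℝ) - N) = -((n:ℝ) - N) by ring, abs_neg,
        abs_of_nonneg]
      have : (N : ℝ) ≤ (n : ℝ) := by exact_mod_cast hn
      linarith
    -- quasiconvexity: c i is K-close to some y ∈ H
    obtain ⟨y, hy, hyK⟩ := hH 1 H.one_mem (p g) (hp g).1 c n hc hc0 hcn i hi
    -- nearest point property
    have hnear : dist (p g) g ≤ dist y g := (hp g).2 y hy
    have htri : dist y g ≤ dist y (c i) + dist (c i) g := dist_triangle _ _ _
    have hyc : dist y (c i) ≤ K := by rw [dist_comm]; exact hyK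
    have hmg : dist (p g) g - K ≤ dist (c i) g := by linarith
    -- Gromov products
    have hgm : gromovProd (c i) g (p g) ≤ ((N : ℝ) + K) / 2 := by
      unfold gromovProd
      rw [hmh]
      have : dist g (p g) = dist (p g) g := dist_comm _ _
      linarith
    have hg1 : gromovProd (c i) 1 (p g) = (N : ℝ) := by
      unfold gromovProd
      rw [hmh, hd1h, dist_comm (c i) 1, h1m]
      ring
    have hhyp := hδ (c i) g 1 (p g)
    rw [hg1] at hhyp
    rcases le_total (gromovProd g 1 (p g)) ((N : ℝ)) with hle | hle
    · have : min (N : ℝ) (gromovProd g 1 (p g)) = gromovProd g 1 (p g) :=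
        min_eq_right hle
      rw [this] at hhyp
      have : gromovProd 1 g (p g) = gromovProd g 1 (p g) := gromovProd_comm _ _ _
      rw [this]
      calc gromovProd g 1 (p g) ≤ ((N : ℝ) + K) / 2 + δ := by linarith
      _ ≤ _ := le_max_right _ _
    · have : min (N : ℝ) (gromovProd g 1 (p g)) = (N : ℝ) := min_eq_left hle
      rw [this] at hhyp
      -- contradiction : N ≤ (N+K)/2 + δ contradicts N > K + 2δ
      exfalso; linarith

lemma fellowTravel_symm {Γ : Type*} [Group Γ] [MetricSpace Γ] {s t : ℕ → Γ}
    (h : FellowTravel s t) : FellowTravel t s := by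
  unfold FellowTravel at *
  simpa only [gromovProd_comm] using h

lemma divergesToInf_of_fellowTravel {Γ : Type*} [Group Γ] [MetricSpace Γ] {δ : ℝ}
    (hδ : IsDeltaHyperbolic Γ δ) (hδ0 : 0 ≤ δ) {s t : ℕ → Γ}
    (hs : DivergesToInf s) (hst : FellowTravel s t) : DivergesToInf t := by
  unfold DivergesToInf at hs ⊢
  have hst' := tendsto_atTop.mp hst
  have hs' := tendsto_atTop.mp hs
  rw [tendsto_atTop]
  intro b
  have hAT : (atTop : Filter (ℕ × ℕ)) = (atTop : Filter ℕ) ×ˢ (atTop : Filter ℕ) :=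
    Filter.prod_atTop_atTop_eq.symm
  have e1 : ∀ᶠ q : ℕ × ℕ in atTop, b + 2 * δ ≤ gromovProd (s q.1) (t q.1) 1 := by
    rw [hAT]; exact Filter.Eventually.prod_inl (hst' (b + 2 * δ)) _
  have e2 : ∀ᶠ q : ℕ × ℕ in atTop, b + 2 * δ ≤ gromovProd (s q.2) (t q.2) 1 := by
    rw [hAT]; exact Filter.Eventually.prod_inr (hst' (b + 2 * δ)) _
  have e3 := hs' (b + 2 * δ)
  filter_upwards [e1, e2, e3] with q h1 h2 h3
  obtain ⟨a, b'⟩ := q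
  simp only at h1 h2 h3 ⊢
  have k1 := hδ (t a) (t b') (s a) 1
  have k2 := hδ (t b') (s a) (s b') 1
  have c1 : gromovProd (t a) (s a) 1 = gromovProd (s a) (t a) 1 := gromovProd_comm _ _ _
  have c2 : gromovProd (t b') (s b') 1 = gromovProd (s b') (t b') 1 := gromovProd_comm _ _ _
  rw [c1] at k1
  rw [c2] at k2
  have m2 : b + 2 * δ ≤ min (gromovProd (s b') (t b') 1) (gromovProd (s a) (s b') 1) :=
    le_min h2 h3
  have hsa : b + δ ≤ gromovProd (t b') (s a) 1 := by linarith
  have m1 : b + δ ≤ min (gromovProd (s a) (t a) 1) (gromovProd (t b') (s a) 1) :=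
    le_min (by linarith) hsa
  linarith

lemma bdryAccPt_transfer {Γ : Type*} [Group Γ] [MetricSpace Γ] {δ : ℝ}
    (hδ : IsDeltaHyperbolic Γ δ) (hδ0 : 0 ≤ δ) {s t : ℕ → Γ}
    (hst : FellowTravel s t) {ε : GromovBoundary Γ} (h : BdryAccPt s ε) :
    BdryAccPt t ε := by
  obtain ⟨φ, hφ, hconv, hq⟩ := h
  have hft : FellowTravel (s ∘ φ) (t ∘ φ) := hst.comp hφ.tendsto_atTop
  have hdt : DivergesToInf (t ∘ φ) :=
    divergesToInf_of_fellowTravel hδ hδ0 hconv hft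
  refine ⟨φ, hφ, hdt, ?_⟩
  rw [← hq]
  exact (Quot.sound (α := {u : ℕ → _ // DivergesToInf u})
    (r := fun a b => FellowTravel a.1 b.1)
    (a := ⟨s ∘ φ, hconv⟩) (b := ⟨t ∘ φ, hdt⟩) hft).symm

/-- if `(γ_n)` diverges away from a quasiconvex subgroup `H`, then for
`γ̂_n = (p (γ_n))⁻¹ γ_n` the sequences `(γ_n⁻¹)` and `(γ̂_n⁻¹)` fellow travel and hence
have the same accumulation sets in the Gromov boundary. -/
theorem stmt3 {Γ : Type*} [Group Γ] [MetricSpace Γ] (δ K : ℝ)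
    (hinv : LeftInvariantMetric Γ) (hgeo : GeodesicMetric Γ)
    (hδ : IsDeltaHyperbolic Γ δ)
    (H : Subgroup Γ) (p : Γ → Γ) (hH : QuasiconvexSubset (H : Set Γ) K)
    (hp : IsNearestPointProj (H : Set Γ) p) (γ : ℕ → Γ)
    (hdiv : Tendsto (fun n => Metric.infDist (γ n) (H : Set Γ)) atTop atTop) :
    FellowTravel (fun n => (γ n)⁻¹) (fun n => ((p (γ n))⁻¹ * γ n)⁻¹) ∧
      {ε : GromovBoundary Γ | BdryAccPt (fun n => (γ n)⁻¹) ε} =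
        {ε : GromovBoundary Γ | BdryAccPt (fun n => ((p (γ n))⁻¹ * γ n)⁻¹) ε} := by
  have hδ0 : 0 ≤ δ := by
    have h := hδ 1 1 1 1
    simp [gromovProd] at h
    linarith
  obtain ⟨C, hC⟩ := proj_gromov_bound δ K hgeo hδ H p hH hp
  -- key pointwise lower bound on the Gromov product
  have key : ∀ n, Metric.infDist (γ n) (H : Set Γ) + -C ≤
      gromovProd ((γ n)⁻¹) (((p (γ n))⁻¹ * γ n)⁻¹) 1 := by
    intro n
    set g := γ n with hg
    set h := p g with hh
    have hA : gromovProd 1 g h ≤ C := hC g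
    have hin : Metric.infDist g (H : Set Γ) ≤ dist g h :=
      Metric.infDist_le_dist_of_mem (hp g).1
    have hrw : ((p g)⁻¹ * g)⁻¹ = g⁻¹ * h := by
      rw [mul_inv_rev, inv_inv, ← hh]
    rw [hrw]
    have d1 : dist (g⁻¹) (1 : Γ) = dist (1 : Γ) g := by
      simpa using (hinv g g⁻¹ 1).symm
    have d2 : dist (g⁻¹ * h) (1 : Γ) = dist h g := by
      simpa using (hinv g (g⁻¹ * h) 1).symm
    have d3 : dist (g⁻¹) (g⁻¹ * h) = dist (1 : Γ) h := by
      simpa using (hinv g g⁻¹ (g⁻¹ * h)).symm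
    have hval : gromovProd (g⁻¹) (g⁻¹ * h) 1 =
        (dist (1 : Γ) g + dist h g - dist (1 : Γ) h) / 2 := by
      unfold gromovProd; rw [d1, d2, d3]
    have hval2 : gromovProd 1 g h = (dist (1 : Γ) h + dist g h - dist (1 : Γ) g) / 2 := rfl
    have hcm : dist g h = dist h g := dist_comm _ _
    rw [hval]
    rw [hval2] at hA
    linarith
  have hft : FellowTravel (fun n => (γ n)⁻¹) (fun n => ((p (γ n))⁻¹ * γ n)⁻¹) := by
    unfold FellowTravel
    exact tendsto_atTop_mono key (tendsto_atTop_add_const_right atTop (-C) hdiv)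
  refine ⟨hft, ?_⟩
  ext ε
  constructor
  · exact fun hacc => bdryAccPt_transfer hδ hδ0 hft hacc
  · exact fun hacc => bdryAccPt_transfer hδ hδ0 (fellowTravel_symm hft) hacc
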